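/- arXiv:1304.1477 — 2 statements merged into one kernel-verified Lean document; each statement's English description precedes it below -/
import Mathlib

section
/- For every p > 3 there exists a constant C_p > 0 such that for every integer N ≥ 1 and all complex numbers α_1, …, α_N: ‖ (Σ_{n≤N} |α_n e_n(x)|²)^{1/2} ‖_{L^p(B)} ≤ C_p (Σ_{n≤N} |α_n|² n^{2−6/p})^{1/2}. -/
open MeasureTheory ProbabilityTheory Filter Real Set
open scoped Classical

noncomputable section

/-- The unit ball in `ℝ³`. -/
def ballB : Set (EuclideanSpace ℝ (Fin 3)) := Metric.ball 0 1

/-- The `n`-th radial Dirichlet eigenfunction of `-Δ` on the unit ball in `ℝ³`,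
`e_n(x) = (2π)^{-1/2} sin(nπ|x|)/|x|`, extended by continuity at `x = 0`. -/
def en (n : ℕ) (x : EuclideanSpace ℝ (Fin 3)) : ℝ :=
  if x = 0 then (2 * π) ^ (-(1:ℝ)/2) * (n * π)
  else (2 * π) ^ (-(1:ℝ)/2) * Real.sin (n * π * ‖x‖) / ‖x‖

/-- Japanese bracket `⟨x⟩ = (1 + |x|²)^{1/2}`. -/
def jap (x : ℝ) : ℝ := Real.sqrt (1 + x ^ 2)

/-- `L^p` norm over the unit ball of a complex-valued function. -/
def lpNormB (p : ℝ) (f : EuclideanSpace ℝ (Fin 3) → ℂ) : ℝ :=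
  (∫ x in ballB, ‖f x‖ ^ p) ^ (1 / p)

/-- Mixed norm `L^p_x(B; L^q_t([0,T]))`. -/
def lpLqNorm (p q T : ℝ) (F : ℝ → EuclideanSpace ℝ (Fin 3) → ℂ) : ℝ :=
  (∫ x in ballB, ((∫ t in Set.Icc (0:ℝ) T, ‖F t x‖ ^ q) ^ (1/q)) ^ p) ^ (1/p)

/-- `H^s` norm of a function `Σ c_n e_n`, in terms of its coefficients. -/
def hsNorm (s : ℝ) (c : ℕ → ℂ) : ℝ :=
  (∑' n : ℕ, (n:ℝ) ^ (2*s) * ‖c n‖ ^ 2) ^ ((1:ℝ)/2)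

/-- `(g_n)` is a sequence of independent standard complex Gaussian random variables:
independent, with i.i.d. real and imaginary parts distributed as `N(0, 1/2)`
(so that `E|g_n|² = 1`). -/
def IsStdGaussianSeq {Ω : Type*} [MeasurableSpace Ω] (P : Measure Ω) (g : ℕ → Ω → ℂ) : Prop :=
  iIndepFun g P ∧
  ∀ n : ℕ, Measurable (g n) ∧
    Measure.map (fun ω => (g n ω).re) P = gaussianReal 0 (1/2) ∧
    Measure.map (fun ω => (g n ω).im) P = gaussianReal 0 (1/2) ∧
    IndepFun (fun ω => (g n ω).re) (fun ω => (g n ω).im) P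

/-- Real part of the truncated solution `u_N(t,x) = Σ_{n=1}^N c_n(t) e_n(x)`. -/
def reU (N : ℕ) (c : ℕ → ℝ → ℂ) (t : ℝ) (x : EuclideanSpace ℝ (Fin 3)) : ℝ :=
  ∑ m ∈ Finset.Icc 1 N, (c m t).re * en m x

/-- `c` is the coefficient family of a global solution of the truncated nonlinear
wave system `i c_n' = nπ c_n − (nπ)^{-1} ∫_B |Re u_N|^α (Re u_N) e_n dx`,
with data `c_n(0) = g_n/(nπ)`. -/
def IsTruncSol (α : ℝ) (N : ℕ) (g : ℕ → ℂ) (c : ℕ → ℝ → ℂ) : Prop :=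
  (∀ n : ℕ, n ∉ Finset.Icc 1 N → c n = 0) ∧
  ∀ n ∈ Finset.Icc 1 N,
    c n 0 = g n / ((n * π : ℝ) : ℂ) ∧
    ∀ t : ℝ, HasDerivAt (c n)
      (-Complex.I * (((n * π : ℝ) : ℂ) * c n t -
        ((n * π : ℝ) : ℂ)⁻¹ *
          ((∫ x in ballB, |reU N c t x| ^ α * reU N c t x * en n x : ℝ) : ℂ))) t

/-- Coefficients of the free evolution `S(t)(P_N φ^{(ω)})` of the truncated random data. -/
def linCoef (g : ℕ → ℂ) (N n : ℕ) (t : ℝ) : ℂ :=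
  if n ∈ Finset.Icc 1 N then
    g n / ((n * π : ℝ) : ℂ) * Complex.exp (-Complex.I * ((n * π * t : ℝ) : ℂ)) else 0

end

/-! The eigenfunctions decay like `|e_n(x)| ≤ 2nπ / (1 + nπ|x|)`, so after the change of
variables `y = nπ x` one gets `‖e_n‖_{L^p}^p ≲ n^{p-3} ∫_{ℝ³} (1 + |y|)^{-p} dy`, and the last
integral is finite exactly when `p > 3`. Minkowski's inequality in `L^{p/2}` applied to
`Σ |α_n e_n|²` then bounds the square function by `Σ |α_n|² ‖e_n‖_p² ≲ Σ |α_n|² n^{2-6/p}`. -/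

open scoped ENNReal
open Module

lemma abs_sin_mul_one_add_le {t : ℝ} (ht : 0 ≤ t) : |sin t| * (1 + t) ≤ 2 * t := by
  rcases le_total t 1 with h | h
  · have := abs_sin_le_abs (x := t)
    rw [abs_of_nonneg ht] at this
    nlinarith [abs_nonneg (sin t)]
  · nlinarith [abs_sin_le_one t, abs_nonneg (sin t)]

section HaarDecay

variable {E F : Type*} [NormedAddCommGroup E] [NormedSpace ℝ E] [FiniteDimensional ℝ E]
  [MeasurableSpace E] [BorelSpace E] (μ : Measure E) [μ.IsAddHaarMeasure] [NormedAddCommGroup F]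

lemma integral_one_add_norm_rpow_neg_pos {r : ℝ} (hr : (finrank ℝ E : ℝ) < r) :
    0 < ∫ x, (1 + ‖x‖) ^ (-r) ∂μ := by
  have hpos : ∀ x : E, 0 < (1 + ‖x‖) ^ (-r) := fun x => by positivity
  rw [integral_pos_iff_support_of_nonneg (fun x => (hpos x).le) (integrable_one_add_norm hr),
    Function.support_eq_univ fun x => (hpos x).ne']
  exact Measure.measure_univ_pos.2 (NeZero.ne μ)

lemma eLpNorm_le_of_norm_le_mul_inv_one_add_norm_smul {f : E → F} {r A c : ℝ}
    (hr : (finrank ℝ E : ℝ) < r) (hc : 0 < c) (hf : ∀ x, ‖f x‖ ≤ A * (1 + ‖c • x‖)⁻¹) :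
    eLpNorm f (ENNReal.ofReal r) μ ≤
      ENNReal.ofReal ((A ^ r * (c ^ finrank ℝ E)⁻¹ * ∫ x, (1 + ‖x‖) ^ (-r) ∂μ) ^ r⁻¹) := by
  have hr0 : 0 < r := (Nat.cast_nonneg _).trans_lt hr
  have hA : 0 ≤ A := nonneg_of_mul_nonneg_left ((norm_nonneg _).trans (hf 0)) (by positivity)
  set g : E → ℝ := fun x => A * (1 + ‖c • x‖)⁻¹
  have hg_rpow : ∀ x, ‖g x‖ ^ r = A ^ r * (1 + ‖c • x‖) ^ (-r) := fun x => by
    rw [Real.norm_of_nonneg (by positivity), Real.mul_rpow hA (by positivity), Real.inv_rpow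
      (by positivity), Real.rpow_neg (by positivity)]
  have hg_int : Integrable (fun x => ‖g x‖ ^ r) μ := by
    simp_rw [hg_rpow]
    exact ((integrable_one_add_norm hr).comp_smul hc.ne').const_mul _
  have hg : MemLp g (ENNReal.ofReal r) μ := by
    refine (integrable_norm_rpow_iff (by fun_prop) (by simpa using hr0) ENNReal.ofReal_ne_top).1 ?_
    rwa [ENNReal.toReal_ofReal hr0.le]
  calc eLpNorm f (ENNReal.ofReal r) μ ≤ eLpNorm g (ENNReal.ofReal r) μ := eLpNorm_mono_real hf
    _ = _ := by
      rw [hg.eLpNorm_eq_integral_rpow_norm (by simpa using hr0) ENNReal.ofReal_ne_top,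
        ENNReal.toReal_ofReal hr0.le]
      simp_rw [hg_rpow]
      rw [integral_const_mul, Measure.integral_comp_smul_of_nonneg μ (fun x => (1 + ‖x‖) ^ (-r)) c
        (hR := hc.le), smul_eq_mul, mul_assoc]

end HaarDecay

@[fun_prop]
lemma measurable_en (n : ℕ) : Measurable (en n) := by
  unfold en
  exact Measurable.ite (measurableSet_singleton 0) measurable_const (by fun_prop)

lemma abs_en_le (n : ℕ) (x : EuclideanSpace ℝ (Fin 3)) :
    |en n x| ≤ 2 * (n * π) * (1 + ‖(n * π) • x‖)⁻¹ := by
  have hc0 : (0:ℝ) < (2 * π) ^ (-(1:ℝ)/2) := by positivity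
  have hc1 : (2 * π) ^ (-(1:ℝ)/2) ≤ 1 :=
    Real.rpow_le_one_of_one_le_of_nonpos (by nlinarith [Real.pi_gt_three]) (by norm_num)
  have hk : (0:ℝ) ≤ n * π := by positivity
  rw [norm_smul, Real.norm_of_nonneg hk]
  unfold en
  split_ifs with hx
  · simp only [hx, norm_zero, mul_zero, add_zero, inv_one, mul_one, abs_mul, abs_of_pos hc0,
      abs_of_nonneg hk]
    nlinarith
  · have hr : 0 < ‖x‖ := norm_pos_iff.2 hx
    set t := n * π * ‖x‖ with ht
    have key := abs_sin_mul_one_add_le (t := t) (by positivity)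
    rw [abs_div, abs_mul, abs_of_pos hc0, abs_of_pos hr, div_le_iff₀ hr,
      show 2 * (n * π) * (1 + t)⁻¹ * ‖x‖ = 2 * t / (1 + t) by rw [ht]; field_simp,
      le_div_iff₀ (by positivity)]
    calc (2 * π) ^ (-(1:ℝ)/2) * |sin t| * (1 + t) = (2 * π) ^ (-(1:ℝ)/2) * (|sin t| * (1 + t)) :=
          mul_assoc _ _ _
      _ ≤ |sin t| * (1 + t) := mul_le_of_le_one_left (by positivity) hc1
      _ ≤ 2 * t := key

lemma exists_eLpNorm_en_le {p : ℝ} (hp : 3 < p) :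
    ∃ c > 0, ∀ n : ℕ, 1 ≤ n → eLpNorm (en n) (ENNReal.ofReal p) (volume.restrict ballB) ≤
      ENNReal.ofReal (c * (n : ℝ) ^ (1 - 3 / p)) := by
  have hdim : (finrank ℝ (EuclideanSpace ℝ (Fin 3)) : ℝ) < p := by
    simpa [finrank_euclideanSpace] using hp
  set I := ∫ x : EuclideanSpace ℝ (Fin 3), (1 + ‖x‖) ^ (-p)
  have hI : 0 < I := integral_one_add_norm_rpow_neg_pos volume hdim
  refine ⟨(2 ^ p * π ^ (p - 3) * I) ^ p⁻¹, by positivity, fun n hn => ?_⟩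
  have hn : (0:ℝ) < n := by exact_mod_cast hn
  have hscale :
      (2 * (n * π)) ^ p * ((n * π) ^ 3)⁻¹ * I = 2 ^ p * π ^ (p - 3) * I * n ^ (p - 3) := by
    rw [Real.mul_rpow (by positivity) (by positivity), Real.mul_rpow hn.le pi_pos.le,
      Real.rpow_sub hn, Real.rpow_sub pi_pos, Real.rpow_ofNat, Real.rpow_ofNat]
    field_simp
  calc eLpNorm (en n) (ENNReal.ofReal p) (volume.restrict ballB)
      ≤ eLpNorm (en n) (ENNReal.ofReal p) volume := eLpNorm_restrict_le _ _ _ _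
    _ ≤ _ := eLpNorm_le_of_norm_le_mul_inv_one_add_norm_smul volume hdim (by positivity)
        fun x => (Real.norm_eq_abs _).trans_le (abs_en_le n x)
    _ = _ := by
      rw [finrank_euclideanSpace_fin, hscale, Real.mul_rpow (by positivity) (by positivity),
        ← Real.rpow_mul hn.le]
      congr 3
      field_simp

section SquareFunction

variable {α F : Type*} [MeasurableSpace α] {μ : Measure α} [NormedAddCommGroup F]

lemma eLpNorm_sum_norm_sq_le {ι : Type*} (s : Finset ι) {f : ι → α → F}
    (hf : ∀ i ∈ s, AEStronglyMeasurable (f i) μ) {p : ℝ≥0∞} (hp : 2 ≤ p) :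
    eLpNorm (fun x => ∑ i ∈ s, ‖f i x‖ ^ 2) (p / 2) μ ≤ ∑ i ∈ s, eLpNorm (f i) p μ ^ 2 := by
  have hp2 : 1 ≤ p / 2 := by
    rwa [ENNReal.le_div_iff_mul_le (by simp) (by simp), one_mul]
  calc eLpNorm (fun x => ∑ i ∈ s, ‖f i x‖ ^ 2) (p / 2) μ
      = eLpNorm (∑ i ∈ s, fun x => ‖f i x‖ ^ (2:ℝ)) (p / 2) μ := by
        congr 1; ext x; simp only [Finset.sum_apply, Real.rpow_two]
    _ ≤ ∑ i ∈ s, eLpNorm (fun x => ‖f i x‖ ^ (2:ℝ)) (p / 2) μ :=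
        eLpNorm_sum_le
          (fun i hi => ((hf i hi).norm.aemeasurable.pow_const _).aestronglyMeasurable) hp2
    _ = ∑ i ∈ s, eLpNorm (f i) p μ ^ 2 := by
        refine Finset.sum_congr rfl fun i _ => ?_
        rw [eLpNorm_norm_rpow _ two_pos, ENNReal.ofReal_ofNat,
          ENNReal.div_mul_cancel two_ne_zero ENNReal.ofNat_ne_top, ENNReal.rpow_two]

lemma integral_sqrt_rpow_le_of_eLpNorm_le {G : α → ℝ} (hGm : AEStronglyMeasurable G μ)
    (hG : ∀ x, 0 ≤ G x) {p B : ℝ} (hp : 0 < p) (hB : 0 ≤ B)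
    (h : eLpNorm G (ENNReal.ofReal (p / 2)) μ ≤ ENNReal.ofReal B) :
    (∫ x, (G x ^ ((1:ℝ) / 2)) ^ p ∂μ) ^ (1 / p) ≤ B ^ ((1:ℝ) / 2) := by
  have hq : ENNReal.ofReal (p / 2) ≠ 0 := by simpa using hp
  have hmem : MemLp G (ENNReal.ofReal (p / 2)) μ := ⟨hGm, h.trans_lt ENNReal.ofReal_lt_top⟩
  rw [hmem.eLpNorm_eq_integral_rpow_norm hq ENNReal.ofReal_ne_top, ENNReal.ofReal_le_ofReal_iff hB,
    ENNReal.toReal_ofReal (by positivity)] at h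
  have hpow : ∀ x, (G x ^ ((1:ℝ) / 2)) ^ p = ‖G x‖ ^ (p / 2) := fun x => by
    rw [Real.norm_of_nonneg (hG x), ← Real.rpow_mul (hG x)]
    ring_nf
  simp_rw [hpow]
  calc (∫ x, ‖G x‖ ^ (p / 2) ∂μ) ^ (1 / p)
      = ((∫ x, ‖G x‖ ^ (p / 2) ∂μ) ^ (p / 2)⁻¹) ^ ((1:ℝ) / 2) := by
        rw [← Real.rpow_mul (integral_nonneg fun x => by positivity)]
        congr 1
        field_simp
    _ ≤ B ^ ((1:ℝ) / 2) := Real.rpow_le_rpow (by positivity) h (by norm_num)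

end SquareFunction

lemma eLpNorm_mul_ofReal {α : Type*} [MeasurableSpace α] (z : ℂ) (φ : α → ℝ) (p : ℝ≥0∞)
    (μ : Measure α) : eLpNorm (fun x => z * (φ x : ℂ)) p μ = ‖z‖ₑ * eLpNorm φ p μ := by
  rw [show (fun x => z * (φ x : ℂ)) = z • fun x => (φ x : ℂ) from rfl, eLpNorm_const_smul,
    eLpNorm_congr_norm_ae (ae_of_all _ fun x => Complex.norm_real (φ x))]

/-- square function estimate, (2.2). For `p > 3`,
`‖(Σ_{n≤N} |α_n e_n(x)|²)^{1/2}‖_{L^p(B)} ≤ C_p (Σ_{n≤N} |α_n|² n^{2-6/p})^{1/2}`. -/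
theorem square_function_estimate (p : ℝ) (hp : 3 < p) :
    ∃ C : ℝ, 0 < C ∧ ∀ N : ℕ, 1 ≤ N → ∀ a : ℕ → ℂ,
      (∫ x in ballB,
          ((∑ n ∈ Finset.Icc 1 N, ‖a n * (en n x : ℂ)‖ ^ 2) ^ ((1:ℝ)/2)) ^ p) ^ (1/p)
        ≤ C * (∑ n ∈ Finset.Icc 1 N, ‖a n‖ ^ 2 * (n : ℝ) ^ (2 - 6/p)) ^ ((1:ℝ)/2) := by
  obtain ⟨c, hc, hen⟩ := exists_eLpNorm_en_le hp
  refine ⟨c, hc, fun N _ a => ?_⟩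
  set S := ∑ n ∈ Finset.Icc 1 N, ‖a n‖ ^ 2 * (n : ℝ) ^ (2 - 6 / p)
  have hterm : ∀ n ∈ Finset.Icc 1 N,
      eLpNorm (fun x => a n * (en n x : ℂ)) (ENNReal.ofReal p) (volume.restrict ballB) ^ 2 ≤
        ENNReal.ofReal (c ^ 2 * (‖a n‖ ^ 2 * (n : ℝ) ^ (2 - 6 / p))) := fun n hn => by
    rw [eLpNorm_mul_ofReal, ← ofReal_norm]
    calc _ ≤ (ENNReal.ofReal ‖a n‖ * ENNReal.ofReal (c * (n : ℝ) ^ (1 - 3 / p))) ^ 2 := by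
          gcongr
          exact hen n (Finset.mem_Icc.1 hn).1
      _ = _ := by
        rw [← ENNReal.ofReal_mul (norm_nonneg _), ← ENNReal.ofReal_pow (by positivity), mul_pow,
          mul_pow, ← Real.rpow_natCast ((n : ℝ) ^ _) 2, ← Real.rpow_mul (Nat.cast_nonneg n)]
        ring_nf
  have hsq : eLpNorm (fun x => ∑ n ∈ Finset.Icc 1 N, ‖a n * (en n x : ℂ)‖ ^ 2)
      (ENNReal.ofReal (p / 2)) (volume.restrict ballB) ≤ ENNReal.ofReal (c ^ 2 * S) := by
    rw [ENNReal.ofReal_div_of_pos two_pos, ENNReal.ofReal_ofNat, Finset.mul_sum,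
      ENNReal.ofReal_sum_of_nonneg fun n _ => by positivity]
    refine (eLpNorm_sum_norm_sq_le _ (fun n _ => by fun_prop) ?_).trans (Finset.sum_le_sum hterm)
    exact ENNReal.ofReal_ofNat 2 ▸ ENNReal.ofReal_le_ofReal (by linarith)
  calc _ ≤ (c ^ 2 * S) ^ ((1:ℝ) / 2) := integral_sqrt_rpow_le_of_eLpNorm_le (by fun_prop)
        (fun x => by positivity) (by linarith) (by positivity) hsq
    _ = c * S ^ ((1:ℝ) / 2) := by
      rw [Real.mul_rpow (by positivity) (by positivity), ← Real.sqrt_eq_rpow, Real.sqrt_sq hc.le]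
end

section
/- Let 0 < s < 1 and p ≥ 1 satisfy 4p > 3 and 1 − 3/(4p) < s − 3/8. Then there exists a constant C > of such that for every finitely supported sequence (a_n)_{n≥1} of complex numbers with Σ_{n≥1} |a_n|² ≤ 1, the function u₁(t,x) = Σ_{n≥1} ⟨n⟩^{−s} a_n e_n(x) e^{2πint} satisfies ‖u₁‖_{L^{4p}_x(B; L^8_t([0,1]))} ≤ C. -/
open MeasureTheory ProbabilityTheory Filter Real Set
open scoped Classical

/-! For fixed `x ≠ 0`, `t ↦ u₁(t, x)` is a trigonometric polynomial with coefficients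
`cₙ = ⟨n⟩^{-s} aₙ eₙ(x)`. On a dyadic block `2^j ≤ n < 2^{j+1}`, the bound
`‖f‖₈⁸ ≤ ‖f‖_∞⁶ ‖f‖₂²`, Cauchy–Schwarz and Plancherel give
`‖f_j‖_{L⁸} ≤ 2^{3j/8} (∑_{block} |cₙ|²)^{1/2}`; hence a weighted bound
`∑ n^{2α} |cₙ|² ≤ A²` with `α > 3/8` sums over the blocks to `‖f‖_{L⁸} ≤ A / (1 - 2^{3/8-α})`.
Interpolating `|sin y| ≤ min(y, 1) ≤ y^θ` gives `|eₙ(x)| ≲ n^θ |x|^{θ-1}`, so `α = s - θ`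
works with `A ≲ |x|^{θ-1}`, and choosing `1 - 3/(4p) < θ < s - 3/8` makes `|x|^{4p(θ-1)}`
integrable on `B`.
-/

open Finset
open scoped ENNReal

section TrigPoly

noncomputable def trigPoly (S : Finset ℕ) (c : ℕ → ℂ) (t : ℝ) : ℂ :=
  ∑ n ∈ S, c n * Complex.exp (2 * π * Complex.I * n * t)

variable (S : Finset ℕ) (c : ℕ → ℂ)

lemma norm_exp_two_pi_I_mul (n : ℕ) (t : ℝ) : ‖Complex.exp (2 * π * Complex.I * n * t)‖ = 1 := by
  rw [show (2 * π * Complex.I * n * t : ℂ) = ((2 * π * n * t : ℝ) : ℂ) * Complex.I by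
    push_cast; ring]
  exact Complex.norm_exp_ofReal_mul_I _

@[fun_prop]
lemma continuous_trigPoly : Continuous (trigPoly S c) := by
  unfold trigPoly; fun_prop

lemma norm_trigPoly_le (t : ℝ) : ‖trigPoly S c t‖ ≤ ∑ n ∈ S, ‖c n‖ :=
  (norm_sum_le _ _).trans_eq <| sum_congr rfl fun n _ => by
    rw [norm_mul, norm_exp_two_pi_I_mul, mul_one]

lemma integral_exp_mul_conj_exp (n m : ℕ) :
    ∫ t in (0:ℝ)..1, Complex.exp (2 * π * Complex.I * n * t)
      * (starRingEnd ℂ) (Complex.exp (2 * π * Complex.I * m * t)) = if n = m then 1 else 0 := by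
  have hexp : ∀ t : ℝ, Complex.exp (2 * π * Complex.I * n * t)
      * (starRingEnd ℂ) (Complex.exp (2 * π * Complex.I * m * t))
      = Complex.exp (((n : ℤ) - m : ℤ) * (2 * π * Complex.I) * t) := fun t => by
    rw [← Complex.exp_conj, ← Complex.exp_add]
    simp only [map_mul, map_ofNat, Complex.conj_ofReal, Complex.conj_I, map_natCast]
    push_cast; ring_nf
  simp_rw [hexp]
  split_ifs with h
  · simp [h]
  · have hk : (((n : ℤ) - m : ℤ) : ℂ) * (2 * π * Complex.I) ≠ 0 := by
      refine mul_ne_zero ?_ (by simp [Real.pi_ne_zero, Complex.I_ne_zero])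
      exact_mod_cast sub_ne_zero.mpr (Int.natCast_inj.not.mpr h)
    rw [integral_exp_mul_complex hk]
    simp only [Complex.ofReal_one, mul_one, Complex.ofReal_zero, mul_zero, Complex.exp_zero,
      Complex.exp_int_mul_two_pi_mul_I, sub_self, zero_div]

lemma integral_norm_trigPoly_sq :
    ∫ t in (0:ℝ)..1, ‖trigPoly S c t‖ ^ 2 = ∑ n ∈ S, ‖c n‖ ^ 2 := by
  have hsq : ∀ z : ℂ, ((‖z‖ ^ 2 : ℝ) : ℂ) = z * (starRingEnd ℂ) z := fun z => by
    rw [Complex.mul_conj, Complex.normSq_eq_norm_sq]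
  apply Complex.ofReal_injective
  rw [← intervalIntegral.integral_ofReal]
  simp_rw [hsq, trigPoly, map_sum, map_mul, sum_mul_sum, Complex.ofReal_sum]
  rw [intervalIntegral.integral_finsetSum fun n _ =>
    (by fun_prop : Continuous _).intervalIntegrable _ _]
  refine sum_congr rfl fun n hn => ?_
  rw [intervalIntegral.integral_finsetSum fun m _ =>
    (by fun_prop : Continuous _).intervalIntegrable _ _]
  have hterm : ∀ m : ℕ, ∫ t in (0:ℝ)..1, c n * Complex.exp (2 * π * Complex.I * n * t) *
      ((starRingEnd ℂ) (c m) * (starRingEnd ℂ) (Complex.exp (2 * π * Complex.I * m * t)))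
      = c n * (starRingEnd ℂ) (c m) * if n = m then 1 else 0 := fun m => by
    rw [← integral_exp_mul_conj_exp, ← intervalIntegral.integral_const_mul]
    congr 1 with t
    ring
  simp_rw [hterm, mul_ite, mul_one, mul_zero, sum_ite_eq, if_pos hn, hsq]

lemma integral_norm_trigPoly_pow_le (k : ℕ) :
    ∫ t in (0:ℝ)..1, ‖trigPoly S c t‖ ^ (2 * k + 2)
      ≤ (#S : ℝ) ^ k * (∑ n ∈ S, ‖c n‖ ^ 2) ^ (k + 1) := by
  set M := (#S : ℝ) * ∑ n ∈ S, ‖c n‖ ^ 2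
  have hsup : ∀ t, ‖trigPoly S c t‖ ^ 2 ≤ M := fun t =>
    (pow_le_pow_left₀ (norm_nonneg _) (norm_trigPoly_le S c t) 2).trans
      (sq_sum_le_card_mul_sum_sq ..)
  calc ∫ t in (0:ℝ)..1, ‖trigPoly S c t‖ ^ (2 * k + 2)
      ≤ ∫ t in (0:ℝ)..1, M ^ k * ‖trigPoly S c t‖ ^ 2 := by
        refine intervalIntegral.integral_mono_on zero_le_one
          (Continuous.intervalIntegrable (by fun_prop) _ _)
          (Continuous.intervalIntegrable (by fun_prop) _ _) fun t _ => ?_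
        rw [pow_add, pow_mul]
        exact mul_le_mul_of_nonneg_right (pow_le_pow_left₀ (by positivity) (hsup t) k)
          (by positivity)
    _ = (#S : ℝ) ^ k * (∑ n ∈ S, ‖c n‖ ^ 2) ^ (k + 1) := by
        rw [intervalIntegral.integral_const_mul, integral_norm_trigPoly_sq]
        ring

end TrigPoly

lemma eLpNorm_restrict_Icc_eq {g : ℝ → ℂ} (hg : Continuous g) {a b : ℝ} {p : ℝ≥0∞}
    (hp0 : p ≠ 0) (hp : p ≠ ∞) :
    eLpNorm g p (volume.restrict (Icc a b))
      = ENNReal.ofReal ((∫ t in Icc a b, ‖g t‖ ^ p.toReal) ^ (1 / p.toReal)) := by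
  obtain ⟨C, hC⟩ := isCompact_Icc.exists_bound_of_continuousOn hg.continuousOn
  have hg : MemLp g p (volume.restrict (Icc a b)) :=
    MemLp.of_bound hg.aestronglyMeasurable C <|
      (ae_restrict_mem measurableSet_Icc).mono fun t ht => hC t ht
  rw [hg.eLpNorm_eq_integral_rpow_norm hp0 hp, one_div]

lemma eLpNorm_trigPoly_le (S : Finset ℕ) (c : ℕ → ℂ) {N D : ℝ} (hN : (#S : ℝ) ≤ N) (hD : 0 ≤ D)
    (hc : ∑ n ∈ S, ‖c n‖ ^ 2 ≤ D ^ 2) :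
    eLpNorm (trigPoly S c) 8 (volume.restrict (Icc 0 1)) ≤ ENNReal.ofReal (N ^ (3/8 : ℝ) * D) := by
  have hN0 : 0 ≤ N := (Nat.cast_nonneg _).trans hN
  have hint : ∫ t in Icc (0:ℝ) 1, ‖trigPoly S c t‖ ^ (8:ℝ) ≤ N ^ 3 * D ^ 8 := by
    rw [integral_Icc_eq_integral_Ioc, ← intervalIntegral.integral_of_le zero_le_one]
    simp_rw [show (8:ℝ) = ((2 * 3 + 2 : ℕ) : ℝ) by norm_num, Real.rpow_natCast]
    refine (integral_norm_trigPoly_pow_le S c 3).trans ?_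
    rw [show D ^ 8 = (D ^ 2) ^ (3 + 1) by ring]
    gcongr
  rw [eLpNorm_restrict_Icc_eq (continuous_trigPoly S c) (by norm_num) (by norm_num)]
  refine ENNReal.ofReal_le_ofReal ?_
  simp only [ENNReal.toReal_ofNat]
  calc (∫ t in Icc (0:ℝ) 1, ‖trigPoly S c t‖ ^ (8:ℝ)) ^ (1 / (8:ℝ))
      ≤ (N ^ 3 * D ^ 8) ^ (1 / (8:ℝ)) := by
        gcongr
    _ = N ^ (3/8 : ℝ) * D := by
        rw [Real.mul_rpow (by positivity) (by positivity), ← Real.rpow_natCast, ← Real.rpow_natCast,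
          ← Real.rpow_mul hN0, ← Real.rpow_mul hD]
        norm_num

lemma mem_Ico_two_pow_log {n : ℕ} (hn : n ≠ 0) :
    n ∈ Finset.Ico (2 ^ Nat.log 2 n) (2 ^ (Nat.log 2 n + 1)) :=
  mem_Ico.mpr ⟨Nat.pow_log_le_self 2 hn, Nat.lt_pow_succ_log_self one_lt_two n⟩

lemma trigPoly_eq_sum_dyadic (S : Finset ℕ) (c : ℕ → ℂ) {J : ℕ} (hJ : ∀ n ∈ S, Nat.log 2 n < J) :
    trigPoly S c = ∑ j ∈ range J, trigPoly {n ∈ S | Nat.log 2 n = j} c := by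
  ext t
  rw [Finset.sum_apply]
  exact (sum_fiberwise_of_maps_to (fun n hn => mem_range.mpr (hJ n hn)) _).symm

lemma sum_norm_sq_le_of_forall_le (c : ℕ → ℂ) {B : Finset ℕ} {N α : ℝ} (hN : 0 < N)
    (hα : 0 ≤ α) (hB : ∀ n ∈ B, N ≤ n) :
    ∑ n ∈ B, ‖c n‖ ^ 2 ≤ (N ^ (-α)) ^ 2 * ∑ n ∈ B, ((n:ℝ) ^ α * ‖c n‖) ^ 2 := by
  rw [mul_sum]
  refine sum_le_sum fun n hn => ?_
  have hn0 : (0:ℝ) < n := hN.trans_le (hB n hn)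
  rw [← mul_pow]
  refine pow_le_pow_left₀ (norm_nonneg _) ?_ 2
  calc ‖c n‖ = (n:ℝ) ^ (-α) * ((n:ℝ) ^ α * ‖c n‖) := by
        rw [← mul_assoc, ← Real.rpow_add hn0, neg_add_cancel, Real.rpow_zero, one_mul]
    _ ≤ N ^ (-α) * ((n:ℝ) ^ α * ‖c n‖) := mul_le_mul_of_nonneg_right
        (Real.rpow_le_rpow_of_nonpos hN (hB n hn) (neg_nonpos.mpr hα)) (by positivity)

lemma eLpNorm_trigPoly_dyadic_le {S : Finset ℕ} (hS : 0 ∉ S) (c : ℕ → ℂ) {α A : ℝ}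
    (hα : 0 ≤ α) (hA : 0 ≤ A) (hc : ∑ n ∈ S, ((n:ℝ) ^ α * ‖c n‖) ^ 2 ≤ A ^ 2) (j : ℕ) :
    eLpNorm (trigPoly {n ∈ S | Nat.log 2 n = j} c) 8 (volume.restrict (Icc 0 1))
      ≤ ENNReal.ofReal (A * (2 ^ (3/8 - α)) ^ j) := by
  set B := {n ∈ S | Nat.log 2 n = j}
  have hB : ∀ n ∈ B, n ∈ Finset.Ico (2 ^ j) (2 ^ (j + 1)) := fun n hn => by
    obtain ⟨hnS, rfl⟩ := mem_filter.mp hn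
    exact mem_Ico_two_pow_log (ne_of_mem_of_not_mem hnS hS)
  have hcard : (#B : ℝ) ≤ 2 ^ j := by
    have := card_le_card (s := B) hB
    rw [Nat.card_Ico, pow_succ, Nat.mul_two, Nat.add_sub_cancel] at this
    exact_mod_cast this
  have hcB : ∑ n ∈ B, ‖c n‖ ^ 2 ≤ (A * ((2:ℝ) ^ j) ^ (-α)) ^ 2 := by
    refine (sum_norm_sq_le_of_forall_le c (N := 2 ^ j) (by positivity) hα fun n hn => ?_).trans ?_
    · exact_mod_cast (mem_Ico.mp (hB n hn)).1
    · rw [mul_pow, mul_comm (A ^ 2)]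
      gcongr
      exact (sum_le_sum_of_subset_of_nonneg (filter_subset _ S) fun n _ _ => sq_nonneg _).trans hc
  refine (eLpNorm_trigPoly_le B c hcard (by positivity) hcB).trans_eq ?_
  rw [← rpow_pow_comm zero_le_two, ← rpow_pow_comm zero_le_two, mul_left_comm, ← mul_pow,
    ← Real.rpow_add two_pos, ← sub_eq_add_neg]

lemma eLpNorm_trigPoly_le_of_weighted_sum {S : Finset ℕ} (hS : 0 ∉ S) (c : ℕ → ℂ) {α A : ℝ}
    (hα : 3/8 < α) (hA : 0 ≤ A) (hc : ∑ n ∈ S, ((n:ℝ) ^ α * ‖c n‖) ^ 2 ≤ A ^ 2) :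
    eLpNorm (trigPoly S c) 8 (volume.restrict (Icc 0 1))
      ≤ ENNReal.ofReal (A * (1 - 2 ^ (3/8 - α))⁻¹) := by
  set q : ℝ := 2 ^ (3/8 - α)
  have hq0 : 0 ≤ q := by positivity
  have hq1 : q < 1 := Real.rpow_lt_one_of_one_lt_of_neg one_lt_two (by linarith)
  set J := S.sup id + 1
  have hJ : ∀ n ∈ S, Nat.log 2 n < J := fun n hn =>
    Nat.lt_succ_of_le ((Nat.log_le_self 2 n).trans (le_sup (f := id) hn))
  calc eLpNorm (trigPoly S c) 8 (volume.restrict (Icc 0 1))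
      ≤ ∑ j ∈ range J, eLpNorm (trigPoly {n ∈ S | Nat.log 2 n = j} c) 8
          (volume.restrict (Icc 0 1)) := by
        rw [trigPoly_eq_sum_dyadic S c hJ]
        exact eLpNorm_sum_le (fun j _ => (continuous_trigPoly _ c).aestronglyMeasurable)
          (by norm_num)
    _ ≤ ∑ j ∈ range J, ENNReal.ofReal (A * q ^ j) :=
        sum_le_sum fun j _ => eLpNorm_trigPoly_dyadic_le hS c (by linarith) hA hc j
    _ = ENNReal.ofReal (A * ∑ j ∈ range J, q ^ j) := by
        rw [← ENNReal.ofReal_sum_of_nonneg fun j _ => by positivity, mul_sum]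
    _ ≤ ENNReal.ofReal (A * (1 - q)⁻¹) := by
        gcongr
        exact (Summable.sum_le_tsum _ (fun j _ => by positivity)
          (summable_geometric_of_lt_one hq0 hq1)).trans_eq (tsum_geometric_of_lt_one hq0 hq1)

lemma abs_sin_le_rpow {y θ : ℝ} (hy : 0 ≤ y) (hθ0 : 0 ≤ θ) (hθ1 : θ ≤ 1) :
    |Real.sin y| ≤ y ^ θ := by
  rcases le_total y 1 with hy1 | hy1
  · calc |Real.sin y| ≤ |y| := Real.abs_sin_le_abs
      _ = y := abs_of_nonneg hy
      _ ≤ y ^ θ := Real.self_le_rpow_of_le_one hy hy1 hθ1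
  · exact (Real.abs_sin_le_one y).trans (Real.one_le_rpow hy1 hθ0)

lemma abs_en_le_s10 {θ : ℝ} (hθ0 : 0 ≤ θ) (hθ1 : θ ≤ 1) (n : ℕ) {x : EuclideanSpace ℝ (Fin 3)}
    (hx : x ≠ 0) : |en n x| ≤ (2 * π) ^ (-(1:ℝ)/2) * (n * π) ^ θ * ‖x‖ ^ (θ - 1) := by
  have hr : 0 < ‖x‖ := norm_pos_iff.mpr hx
  rw [en, if_neg hx, abs_div, abs_mul, abs_of_pos (by positivity), abs_of_pos hr,
    Real.rpow_sub hr, Real.rpow_one, mul_div_assoc', div_le_div_iff_of_pos_right hr,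
    mul_assoc ((2 * π) ^ (-(1:ℝ)/2)), ← Real.mul_rpow (by positivity) hr.le]
  exact mul_le_mul_of_nonneg_left (abs_sin_le_rpow (by positivity) hθ0 hθ1) (by positivity)

lemma jap_nonneg (y : ℝ) : 0 ≤ jap y := Real.sqrt_nonneg _

lemma le_jap (y : ℝ) : y ≤ jap y :=
  Real.le_sqrt_of_sq_le (by linarith)

lemma rpow_mul_jap_rpow_neg_mul_abs_en_le {s θ : ℝ} (hs : 0 ≤ s) (hθ0 : 0 ≤ θ) (hθ1 : θ ≤ 1)
    {n : ℕ} (hn : n ≠ 0) {x : EuclideanSpace ℝ (Fin 3)} (hx : x ≠ 0) :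
    (n:ℝ) ^ (s - θ) * (jap n ^ (-s) * |en n x|)
      ≤ (2 * π) ^ (-(1:ℝ)/2) * π ^ θ * ‖x‖ ^ (θ - 1) := by
  have hn0 : (0:ℝ) < n := by positivity
  calc (n:ℝ) ^ (s - θ) * (jap n ^ (-s) * |en n x|)
      ≤ (n:ℝ) ^ (s - θ) *
          ((n:ℝ) ^ (-s) * ((2 * π) ^ (-(1:ℝ)/2) * (n * π) ^ θ * ‖x‖ ^ (θ - 1))) := by
        refine mul_le_mul_of_nonneg_left (mul_le_mul ?_ (abs_en_le_s10 hθ0 hθ1 n hx)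
          (abs_nonneg _) (by positivity)) (by positivity)
        exact Real.rpow_le_rpow_of_nonpos hn0 (le_jap n) (neg_nonpos.mpr hs)
    _ = (2 * π) ^ (-(1:ℝ)/2) * π ^ θ * ‖x‖ ^ (θ - 1)
          * ((n:ℝ) ^ (s - θ) * (n:ℝ) ^ (-s) * (n:ℝ) ^ θ) := by
        rw [Real.mul_rpow hn0.le Real.pi_pos.le]; ring
    _ = (2 * π) ^ (-(1:ℝ)/2) * π ^ θ * ‖x‖ ^ (θ - 1) := by
        rw [← Real.rpow_add hn0, ← Real.rpow_add hn0]; ring_nf; rw [Real.rpow_zero, mul_one]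

lemma sum_sq_rpow_mul_norm_coeff_le {s θ : ℝ} (hs : 0 ≤ s) (hθ0 : 0 ≤ θ) (hθ1 : θ ≤ 1)
    {S : Finset ℕ} (hS : 0 ∉ S) {a : ℕ → ℂ} (ha : ∑ n ∈ S, ‖a n‖ ^ 2 ≤ 1)
    {x : EuclideanSpace ℝ (Fin 3)} (hx : x ≠ 0) :
    ∑ n ∈ S, ((n:ℝ) ^ (s - θ) * ‖((jap (n : ℝ) ^ (-s) : ℝ) : ℂ) * a n * (en n x : ℂ)‖) ^ 2
      ≤ ((2 * π) ^ (-(1:ℝ)/2) * π ^ θ * ‖x‖ ^ (θ - 1)) ^ 2 := by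
  set A := (2 * π) ^ (-(1:ℝ)/2) * π ^ θ * ‖x‖ ^ (θ - 1)
  calc ∑ n ∈ S, ((n:ℝ) ^ (s - θ) * ‖((jap (n : ℝ) ^ (-s) : ℝ) : ℂ) * a n * (en n x : ℂ)‖) ^ 2
      ≤ ∑ n ∈ S, (A * ‖a n‖) ^ 2 := by
        refine sum_le_sum fun n hn => pow_le_pow_left₀ (by positivity) ?_ 2
        simp only [norm_mul, Complex.norm_real, Real.norm_eq_abs,
          abs_of_nonneg (Real.rpow_nonneg (jap_nonneg n) (-s))]
        calc (n:ℝ) ^ (s - θ) * (jap n ^ (-s) * ‖a n‖ * |en n x|)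
            = (n:ℝ) ^ (s - θ) * (jap n ^ (-s) * |en n x|) * ‖a n‖ := by ring
          _ ≤ A * ‖a n‖ := mul_le_mul_of_nonneg_right (rpow_mul_jap_rpow_neg_mul_abs_en_le hs hθ0
              hθ1 (ne_of_mem_of_not_mem hn hS) hx) (norm_nonneg _)
    _ = A ^ 2 * ∑ n ∈ S, ‖a n‖ ^ 2 := by rw [mul_sum]; ring_nf
    _ ≤ A ^ 2 := mul_le_of_le_one_right (sq_nonneg A) ha

lemma integral_norm_rpow_eight_le {s θ : ℝ} (hθ0 : 0 ≤ θ) (hθ1 : θ ≤ 1) (hθs : 3/8 < s - θ)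
    {a : ℕ → ℂ} (ha : (Function.support a).Finite) (ha1 : ∑' n : ℕ, ‖a n‖ ^ 2 ≤ 1)
    {x : EuclideanSpace ℝ (Fin 3)} (hx : x ≠ 0) :
    (∫ t in Icc (0:ℝ) 1, ‖∑' n : ℕ, ((jap (n : ℝ) ^ (-s) : ℝ) : ℂ) * a n * (en n x : ℂ)
        * Complex.exp (2 * π * Complex.I * n * t)‖ ^ (8:ℝ)) ^ (1 / (8:ℝ))
      ≤ (2 * π) ^ (-(1:ℝ)/2) * π ^ θ * (1 - 2 ^ (3/8 - (s - θ)))⁻¹ * ‖x‖ ^ (θ - 1) := by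
  set c : ℕ → ℂ := fun n => ((jap (n : ℝ) ^ (-s) : ℝ) : ℂ) * a n * (en n x : ℂ)
  set S := ha.toFinset.erase 0
  have hsum : ∀ t : ℝ, ∑' n : ℕ, ((jap (n : ℝ) ^ (-s) : ℝ) : ℂ) * a n * (en n x : ℂ)
      * Complex.exp (2 * π * Complex.I * n * t) = trigPoly S c t :=
    fun t => tsum_eq_sum fun n hn => by
      rcases eq_or_ne n 0 with rfl | hn0
      · simp [en]
      · simp [show a n = 0 by simpa [S, hn0] using hn]
  have haS : ∑ n ∈ S, ‖a n‖ ^ 2 ≤ 1 :=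
    (Summable.sum_le_tsum S (fun n _ => by positivity)
      (summable_of_ne_finset_zero (s := ha.toFinset) fun n hn => by simp_all)).trans ha1
  have hq : (2:ℝ) ^ (3/8 - (s - θ)) < 1 :=
    Real.rpow_lt_one_of_one_lt_of_neg one_lt_two (by linarith)
  have hL8 := eLpNorm_trigPoly_le_of_weighted_sum (notMem_erase 0 _) c hθs (by positivity)
    (sum_sq_rpow_mul_norm_coeff_le (by linarith) hθ0 hθ1 (notMem_erase 0 _) haS hx)
  rw [eLpNorm_restrict_Icc_eq (continuous_trigPoly S c) (by norm_num) (by norm_num),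
    ENNReal.ofReal_le_ofReal_iff
      (mul_nonneg (by positivity) (inv_nonneg.mpr (sub_nonneg.mpr hq.le))),
    ENNReal.toReal_ofNat] at hL8
  simp_rw [hsum]
  exact hL8.trans_eq (by ring)

lemma integrableOn_ball_norm_rpow_neg {E : Type*} [NormedAddCommGroup E] [NormedSpace ℝ E]
    [FiniteDimensional ℝ E] [MeasurableSpace E] [BorelSpace E] (μ : Measure E)
    [μ.IsAddHaarMeasure] {γ r : ℝ} (hγ : γ < Module.finrank ℝ E) (hd : 1 ≤ Module.finrank ℝ E) :
    IntegrableOn (fun x : E => ‖x‖ ^ (-γ)) (Metric.ball 0 r) μ :=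
  integrableOn_ball_of_norm_le_rpow (C := 1) hd hγ
    (ae_of_all _ fun x => by rw [one_mul, Real.norm_of_nonneg (by positivity)])
    (measurable_norm.pow_const _).aestronglyMeasurable

theorem nonlinearity_building_block_quartic_general (s p : ℝ)
    (hp3 : 3 < 4*p) (hcond : 1 - 3/(4*p) < s - 3/8) :
    ∃ C : ℝ, 0 < C ∧ ∀ a : ℕ → ℂ, (Function.support a).Finite →
      (∑' n : ℕ, ‖a n‖ ^ 2) ≤ 1 →
      lpLqNorm (4*p) 8 1
        (fun t x => ∑' n : ℕ,
          ((jap (n : ℝ) ^ (-s) : ℝ) : ℂ) * a n * (en n x : ℂ)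
            * Complex.exp (2 * π * Complex.I * n * t)) ≤ C := by
  have h4p : 0 < 4 * p := by linarith
  have h3p : 0 < 3 / (4 * p) ∧ 3 / (4 * p) < 1 := ⟨by positivity, (div_lt_one h4p).mpr hp3⟩
  obtain ⟨θ, hθp, hθ⟩ : ∃ θ, 1 - 3/(4*p) < θ ∧ θ < min (s - 3/8) 1 :=
    exists_between (lt_min hcond (by linarith [h3p.1]))
  obtain ⟨hθs, hθ1⟩ := lt_min_iff.mp hθ
  set K := (2 * π) ^ (-(1:ℝ)/2) * π ^ θ * (1 - 2 ^ (3/8 - (s - θ)))⁻¹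
  have hK : 0 ≤ K := mul_nonneg (by positivity) <| inv_nonneg.mpr <| sub_nonneg.mpr <|
    (Real.rpow_lt_one_of_one_lt_of_neg one_lt_two (by linarith)).le
  set γ := (1 - θ) * (4 * p) with hγ_def
  have hγ : γ < 3 := (lt_div_iff₀ h4p).mp (by linarith)
  have hG : IntegrableOn (fun x => K ^ (4 * p) * ‖x‖ ^ (-γ)) ballB :=
    (integrableOn_ball_norm_rpow_neg (E := EuclideanSpace ℝ (Fin 3)) volume (by simpa using hγ)
      (by simp)).const_mul _
  refine ⟨max ((∫ x in ballB, K ^ (4 * p) * ‖x‖ ^ (-γ)) ^ (1 / (4 * p))) 1, by positivity,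
    fun a ha ha1 => le_max_of_le_left ?_⟩
  refine Real.rpow_le_rpow (by positivity) (integral_mono_of_nonneg
    (ae_of_all _ fun x => by positivity) hG ?_) (by positivity)
  filter_upwards [compl_mem_ae_iff.mpr (measure_singleton 0)] with x hx
  calc _ ≤ (K * ‖x‖ ^ (θ - 1)) ^ (4 * p) := Real.rpow_le_rpow (by positivity)
        (integral_norm_rpow_eight_le (by linarith) hθ1.le (by linarith) ha ha1 hx) h4p.le
    _ = K ^ (4 * p) * ‖x‖ ^ (-γ) := by
        rw [Real.mul_rpow hK (by positivity), ← Real.rpow_mul (norm_nonneg x), hγ_def]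
        ring_nf

/-- Section 3.1 estimate. For `0 < s < 1`, `p ≥ 1` with `4p > 3` and
`1 - 3/(4p) < s - 3/8`: if `Σ|a_n|² ≤ 1` then
`‖Σ ⟨n⟩^{-s} a_n e_n(x) e^{2πint}‖_{L^{4p}_x L^8_t([0,1])} ≤ C`. -/
theorem nonlinearity_building_block_quartic (s p : ℝ) (hs0 : 0 < s) (hs1 : s < 1)
    (hp1 : 1 ≤ p) (hp3 : 3 < 4*p) (hcond : 1 - 3/(4*p) < s - 3/8) :
    ∃ C : ℝ, 0 < C ∧ ∀ a : ℕ → ℂ, (Function.support a).Finite →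
      (∑' n : ℕ, ‖a n‖ ^ 2) ≤ 1 →
      lpLqNorm (4*p) 8 1
        (fun t x => ∑' n : ℕ,
          ((jap (n : ℝ) ^ (-s) : ℝ) : ℂ) * a n * (en n x : ℂ)
            * Complex.exp (2 * π * Complex.I * n * t)) ≤ C :=
  nonlinearity_building_block_quartic_general s p hp3 hcond
end
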